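/- Let a>0 and 1<s<∞. Let Ω : ℝ^d → ℝ be homogeneous of degree 0 (Ω(tx) = Ω(x) for all t>0, x≠0) with ‖Ω‖_{L^s(S^{d-1})} := (∫_{S^{d-1}} |Ω|^s dσ)^{1/s} < ∞. Then there is a constant C = C(a,d,s) such that for every x ∈ ℝ^d and every ball B ∈ 𝓑_a(x): (∫_B |Ω(x−y)|^s dγ(y))^{1/s} ≤ C ‖Ω‖_{L^s(S^{d-1})} · γ(B)^{1/s}. -/
import Mathlib


open MeasureTheory ENNReal Real Set Metric
open scoped Classical

noncomputable section

/-- ℝ^d with the Euclidean norm. -/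
abbrev Euc (d : ℕ) := EuclideanSpace ℝ (Fin d)

/-- The Gaussian measure dγ(x) = π^{-d/2} e^{-|x|²} dx. -/
def gaussMeasure (d : ℕ) : Measure (Euc d) :=
  volume.withDensity fun x => ENNReal.ofReal (Real.pi ^ (-(d : ℝ) / 2) * Real.exp (-‖x‖ ^ 2))

/-- m(x) = min(1, 1/|x|) (with value 1 at x = 0). -/
def adm {d : ℕ} (x : Euc d) : ℝ := if ‖x‖ ≤ 1 then 1 else ‖x‖⁻¹

/-- `B(c,r) ∈ 𝓑_a`: the admissibility condition for a ball of center `c` and radius `r`. -/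
def IsAdm {d : ℕ} (a : ℝ) (c : Euc d) (r : ℝ) : Prop := 0 < r ∧ r < a * adm c

/-- The surface measure σ on the unit sphere S^{d-1}. -/
def sphereMeasure (d : ℕ) : Measure (sphere (0 : Euc d) 1) :=
  (volume : Measure (Euc d)).toSphere

/-- The local fractional maximal operator with rough kernel Ω:
M_{Ω,β}^a(f)(x) = sup_{B∈𝓑_a(x)} γ(B)^{β-1} ∫_B |Ω(x-y)||f(y)| dγ(y). -/
def roughMax {d : ℕ} (a β : ℝ) (Ω f : Euc d → ℝ) (x : Euc d) : ℝ≥0∞ :=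
  ⨆ (c : Euc d) (r : ℝ) (_ : IsAdm a c r) (_ : x ∈ ball c r),
    (gaussMeasure d (ball c r)) ^ (β - 1) *
      ∫⁻ y in ball c r, ENNReal.ofReal |Ω (x - y)| * ENNReal.ofReal |f y| ∂gaussMeasure d

/-- The local fractional integral operator with rough kernel Ω:
I_{Ω,β}^a(f)(x) = ∫_{B(x,a m(x))} Ω(x-y) f(y) γ(B(x,|x-y|))^{β-1} dγ(y). -/
def roughIfrac {d : ℕ} (a β : ℝ) (Ω f : Euc d → ℝ) (x : Euc d) : ℝ :=
  ∫ y in ball x (a * adm x),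
    Ω (x - y) * f y * ((gaussMeasure d (ball x ‖x - y‖)).toReal) ^ (β - 1) ∂gaussMeasure d

/-! ### Auxiliary lemmas -/

lemma adm_pos' {d : ℕ} (c : Euc d) : 0 < adm c := by
  unfold adm
  split_ifs with h
  · norm_num
  · exact inv_pos.2 (lt_of_le_of_lt zero_le_one (not_le.1 h))

lemma adm_le_one' {d : ℕ} (c : Euc d) : adm c ≤ 1 := by
  unfold adm
  split_ifs with h
  · exact le_refl 1
  · exact inv_le_one_of_one_le₀ (not_le.1 h).le

lemma adm_mul_norm_le_one' {d : ℕ} (c : Euc d) : adm c * ‖c‖ ≤ 1 := by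
  unfold adm
  split_ifs with h
  · simpa using h
  · rw [inv_mul_cancel₀ (lt_of_le_of_lt zero_le_one (not_le.1 h)).ne']

/-- The squared norms of points in an admissible ball differ from that of the center
by at most `2a + a²`. -/
lemma sq_close' {d : ℕ} {a r : ℝ} (ha : 0 < a) {c y : Euc d} (h : IsAdm a c r)
    (hy : y ∈ ball c r) : |‖y‖ ^ 2 - ‖c‖ ^ 2| ≤ 2 * a + a ^ 2 := by
  have h1 : |‖y‖ - ‖c‖| ≤ ‖y - c‖ := abs_norm_sub_norm_le _ _
  have h2 : ‖y - c‖ < r := by rwa [mem_ball, dist_eq_norm] at hy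
  have h3 : r < a * adm c := h.2
  have h4 := abs_lt.1 (lt_of_le_of_lt h1 h2)
  have h5 : adm c ≤ 1 := adm_le_one' c
  have h6 : adm c * ‖c‖ ≤ 1 := adm_mul_norm_le_one' c
  have h7 : 0 < adm c := adm_pos' c
  have h8 : (0:ℝ) ≤ ‖c‖ := norm_nonneg c
  have h9 : (0:ℝ) ≤ ‖y‖ := norm_nonneg y
  have hr : 0 < r := h.1
  have hyn : ‖y‖ ≤ ‖c‖ + r := by linarith [h4.2]
  have t1 : r * ‖c‖ ≤ a := by
    calc r * ‖c‖ ≤ (a * adm c) * ‖c‖ := mul_le_mul_of_nonneg_right h3.le h8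
      _ = a * (adm c * ‖c‖) := by ring
      _ ≤ a * 1 := mul_le_mul_of_nonneg_left h6 ha.le
      _ = a := mul_one a
  have t2 : r ≤ a := by nlinarith
  have hint1 : (‖y‖ ^ 2 - ‖c‖ ^ 2) ≤ r * (‖y‖ + ‖c‖) := by nlinarith [h4.2]
  have hint2 : (‖c‖ ^ 2 - ‖y‖ ^ 2) ≤ r * (‖y‖ + ‖c‖) := by nlinarith [h4.1]
  have hint3 : r * ‖y‖ ≤ r * (‖c‖ + r) := mul_le_mul_of_nonneg_left hyn hr.le
  have hint4 : r * r ≤ a * a := mul_self_le_mul_self hr.le t2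
  rw [abs_le]
  constructor <;> nlinarith [t1, hint1, hint2, hint3, hint4]

/-- Polar-coordinates computation for 0-homogeneous functions over centered balls. -/
lemma polar' {d : ℕ} (hd : 0 < d) (H : Euc d → ℝ≥0∞) (hm : Measurable H)
    (hh : ∀ (t : ℝ) (x : Euc d), 0 < t → x ≠ 0 → H (t • x) = H x)
    {R : ℝ} (hR : 0 < R) :
    ∫⁻ z in ball (0 : Euc d) R, H z ∂volume =
      (∫⁻ z : sphere (0 : Euc d) 1, H ↑z ∂sphereMeasure d) * ENNReal.ofReal (R ^ d / d) := by
  haveI : Nonempty (Fin d) := Fin.pos_iff_nonempty.1 hd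
  have hdim : Module.finrank ℝ (Euc d) = d := finrank_euclideanSpace_fin
  set Rp : Ioi (0:ℝ) := ⟨R, hR⟩ with hRp
  set g : sphere (0 : Euc d) 1 × Ioi (0:ℝ) → ℝ≥0∞ :=
    fun p => H ↑p.1 * (Iio Rp).indicator (fun _ => 1) p.2 with hgdef
  have hmg : Measurable g :=
    ((hm.comp measurable_subtype_coe).comp measurable_fst).mul
      ((measurable_const.indicator measurableSet_Iio).comp measurable_snd)
  have mp := Measure.measurePreserving_homeomorphUnitSphereProd (volume : Measure (Euc d))
  have h2 : ∫⁻ x : ({0}ᶜ : Set (Euc d)), g (homeomorphUnitSphereProd (Euc d) x)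
      ∂((volume : Measure (Euc d)).comap (↑)) =
      ∫⁻ p, g p ∂(((volume : Measure (Euc d)).toSphere).prod
        (Measure.volumeIoiPow (Module.finrank ℝ (Euc d) - 1))) :=
    mp.lintegral_comp hmg
  have h1 : ∫⁻ p, g p ∂(((volume : Measure (Euc d)).toSphere).prod
        (Measure.volumeIoiPow (Module.finrank ℝ (Euc d) - 1))) =
      (∫⁻ z : sphere (0 : Euc d) 1, H ↑z ∂sphereMeasure d) * ENNReal.ofReal (R ^ d / d) := by
    rw [hgdef, lintegral_prod_mul (f := fun z : sphere (0:Euc d) 1 => H ↑z)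
      (g := (Iio Rp).indicator fun _ => (1:ℝ≥0∞))
      (hm.comp measurable_subtype_coe).aemeasurable
      (measurable_const.indicator measurableSet_Iio).aemeasurable]
    congr 1
    rw [lintegral_indicator measurableSet_Iio, setLIntegral_one,
      Measure.volumeIoiPow_apply_Iio, hdim, Nat.sub_add_cancel hd]
    congr 2
    rw [Nat.cast_sub hd]
    push_cast
    ring_nf
  have h3 : ∀ x : ({0}ᶜ : Set (Euc d)), g (homeomorphUnitSphereProd (Euc d) x) =
      H ↑x * (ball (0:Euc d) R).indicator (fun _ => 1) ↑x := by
    intro x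
    have hx0 : (x : Euc d) ≠ 0 := x.2
    have hxn : (0:ℝ) < ‖(x:Euc d)‖ := norm_pos_iff.2 hx0
    rw [hgdef]
    simp only [homeomorphUnitSphereProd_apply_fst_coe, homeomorphUnitSphereProd_apply_snd_coe]
    congr 1
    · exact hh _ _ (inv_pos.2 hxn) hx0
    · have hiff : (((homeomorphUnitSphereProd (Euc d)) x).2 ∈ Iio Rp) ↔
          (↑x : Euc d) ∈ ball (0:Euc d) R := by
        rw [mem_Iio, ← Subtype.coe_lt_coe, homeomorphUnitSphereProd_apply_snd_coe, hRp,
          mem_ball_zero_iff]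
      by_cases hb : (↑x : Euc d) ∈ ball (0:Euc d) R
      · rw [indicator_of_mem (hiff.2 hb), indicator_of_mem hb]
      · rw [indicator_of_notMem (fun h => hb (hiff.1 h)), indicator_of_notMem hb]
  have h4 : ∫⁻ x : ({0}ᶜ : Set (Euc d)), g (homeomorphUnitSphereProd (Euc d) x)
      ∂((volume : Measure (Euc d)).comap (↑)) = ∫⁻ z in ball (0 : Euc d) R, H z ∂volume := by
    calc ∫⁻ x : ({0}ᶜ : Set (Euc d)), g (homeomorphUnitSphereProd (Euc d) x)
        ∂((volume : Measure (Euc d)).comap (↑))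
        = ∫⁻ x : ({0}ᶜ : Set (Euc d)), H ↑x * (ball (0:Euc d) R).indicator (fun _ => 1) ↑x
          ∂((volume : Measure (Euc d)).comap (↑)) := by
          exact lintegral_congr h3
      _ = ∫⁻ x in ({0}ᶜ : Set (Euc d)),
            H x * (ball (0:Euc d) R).indicator (fun _ => 1) x ∂volume :=
          lintegral_subtype_comap (μ := (volume : Measure (Euc d)))
            (measurableSet_singleton 0).compl
            (fun x => H x * (ball (0:Euc d) R).indicator (fun _ => 1) x)
      _ = ∫⁻ x, H x * (ball (0:Euc d) R).indicator (fun _ => 1) x ∂volume := by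
          rw [← lintegral_indicator (measurableSet_singleton 0).compl]
          refine lintegral_congr_ae ?_
          filter_upwards [compl_mem_ae_iff.2 (measure_singleton (0:Euc d))] with y hy
          rw [indicator_of_mem hy]
      _ = ∫⁻ x, (ball (0:Euc d) R).indicator H x ∂volume := by
          refine lintegral_congr fun y => ?_
          by_cases hy : y ∈ ball (0:Euc d) R
          · rw [indicator_of_mem hy, indicator_of_mem hy, mul_one]
          · rw [indicator_of_notMem hy, indicator_of_notMem hy, mul_zero]
      _ = ∫⁻ z in ball (0 : Euc d) R, H z ∂volume := lintegral_indicator measurableSet_ball H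
  rw [← h4, h2, h1]

/-- the L^s-average of a rough kernel over an admissible ball is controlled
by its L^s(S^{d-1}) norm times γ(B)^{1/s}. -/
theorem stmt15 {d : ℕ} (hd : 0 < d) (a : ℝ) (ha : 0 < a) (s : ℝ) (hs : 1 < s)
    (Ω : Euc d → ℝ) (hΩm : Measurable Ω)
    (hΩh : ∀ (t : ℝ) (x : Euc d), 0 < t → x ≠ 0 → Ω (t • x) = Ω x)
    (hΩs : (∫⁻ z : sphere (0 : Euc d) 1,
        ENNReal.ofReal |Ω ↑z| ^ s ∂sphereMeasure d) < ⊤) :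
    ∃ C : ℝ≥0∞, C ≠ ⊤ ∧ ∀ (x c : Euc d) (r : ℝ), IsAdm a c r → x ∈ ball c r →
      (∫⁻ y in ball c r, ENNReal.ofReal |Ω (x - y)| ^ s ∂gaussMeasure d) ^ (1 / s) ≤
        C * (∫⁻ z : sphere (0 : Euc d) 1,
              ENNReal.ofReal |Ω ↑z| ^ s ∂sphereMeasure d) ^ (1 / s) *
          (gaussMeasure d (ball c r)) ^ (1 / s) := by
  haveI : Nonempty (Fin d) := Fin.pos_iff_nonempty.1 hd
  have hdim : Module.finrank ℝ (Euc d) = d := finrank_euclideanSpace_fin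
  set N := ∫⁻ z : sphere (0 : Euc d) 1, ENNReal.ofReal |Ω ↑z| ^ s ∂sphereMeasure d with hN
  set K : ℝ≥0∞ := ENNReal.ofReal (Real.exp (2 * a + a ^ 2)) with hK
  have hK0 : K ≠ 0 := by
    simp only [hK, ne_eq, ENNReal.ofReal_eq_zero, not_le]
    exact Real.exp_pos _
  have hKt : K ≠ ⊤ := ofReal_ne_top
  set V : ℝ≥0∞ := volume (ball (0 : Euc d) 1) with hV
  have hV0 : V ≠ 0 := (measure_ball_pos _ _ one_pos).ne'
  have hVt : V ≠ ⊤ := measure_ball_lt_top.ne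
  set D : ℝ≥0∞ := K ^ 2 * ENNReal.ofReal (2 ^ d / d) * V⁻¹ with hD
  have hDt : D ≠ ⊤ :=
    ENNReal.mul_ne_top (ENNReal.mul_ne_top (ENNReal.pow_ne_top hKt) ofReal_ne_top)
      (ENNReal.inv_ne_top.2 hV0)
  have hs' : (0:ℝ) ≤ 1 / s := by positivity
  refine ⟨D ^ (1 / s), ENNReal.rpow_ne_top_of_nonneg hs' hDt, ?_⟩
  intro x c r hadm hx
  set H : Euc d → ℝ≥0∞ := fun z => ENNReal.ofReal |Ω z| ^ s with hHdef
  have hHm : Measurable H := (ENNReal.measurable_ofReal.comp hΩm.abs).pow measurable_const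
  have hHh : ∀ (t : ℝ) (z : Euc d), 0 < t → z ≠ 0 → H (t • z) = H z := by
    intro t z ht hz
    simp only [hHdef, hΩh t z ht hz]
  set dens : Euc d → ℝ≥0∞ :=
    fun y => ENNReal.ofReal (Real.pi ^ (-(d : ℝ) / 2) * Real.exp (-‖y‖ ^ 2)) with hdens
  have hdm : Measurable dens := by
    apply Measurable.ennreal_ofReal
    exact measurable_const.mul ((measurable_norm.pow_const 2).neg.exp)
  have hpi : (0:ℝ) < Real.pi ^ (-(d : ℝ) / 2) := Real.rpow_pos_of_pos Real.pi_pos _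
  have hHm2 : Measurable fun y : Euc d => H (x - y) :=
    hHm.comp (measurable_const.sub measurable_id)
  -- pointwise density comparison
  have hdle : ∀ y ∈ ball c r, dens y ≤ K * dens c := by
    intro y hy
    rw [hdens, hK, ← ENNReal.ofReal_mul (Real.exp_pos _).le]
    apply ENNReal.ofReal_le_ofReal
    have h1 : -‖y‖ ^ 2 ≤ (2 * a + a ^ 2) + -‖c‖ ^ 2 := by
      have := (abs_le.1 (sq_close' ha hadm hy)).2
      linarith [neg_abs_le (‖y‖ ^ 2 - ‖c‖ ^ 2), (abs_le.1 (sq_close' ha hadm hy)).1]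
    calc Real.pi ^ (-(d : ℝ) / 2) * Real.exp (-‖y‖ ^ 2)
        ≤ Real.pi ^ (-(d : ℝ) / 2) * (Real.exp (2 * a + a ^ 2) * Real.exp (-‖c‖ ^ 2)) := by
          rw [← Real.exp_add]
          exact mul_le_mul_of_nonneg_left (Real.exp_le_exp.2 h1) hpi.le
      _ = Real.exp (2 * a + a ^ 2) * (Real.pi ^ (-(d : ℝ) / 2) * Real.exp (-‖c‖ ^ 2)) := by ring
  have hdge : ∀ y ∈ ball c r, K⁻¹ * dens c ≤ dens y := by
    intro y hy
    have h1 : dens c ≤ K * dens y := by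
      rw [hdens, hK, ← ENNReal.ofReal_mul (Real.exp_pos _).le]
      apply ENNReal.ofReal_le_ofReal
      have h1 : -‖c‖ ^ 2 ≤ (2 * a + a ^ 2) + -‖y‖ ^ 2 := by
        linarith [(abs_le.1 (sq_close' ha hadm hy)).2]
      calc Real.pi ^ (-(d : ℝ) / 2) * Real.exp (-‖c‖ ^ 2)
          ≤ Real.pi ^ (-(d : ℝ) / 2) * (Real.exp (2 * a + a ^ 2) * Real.exp (-‖y‖ ^ 2)) := by
            rw [← Real.exp_add]
            exact mul_le_mul_of_nonneg_left (Real.exp_le_exp.2 h1) hpi.le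
        _ = Real.exp (2 * a + a ^ 2) * (Real.pi ^ (-(d : ℝ) / 2) * Real.exp (-‖y‖ ^ 2)) := by
            ring
    calc K⁻¹ * dens c ≤ K⁻¹ * (K * dens y) := mul_le_mul_right h1 _
      _ = dens y := by rw [← mul_assoc, ENNReal.inv_mul_cancel hK0 hKt, one_mul]
  have hrpos : 0 < r := hadm.1
  -- gauss integral as weighted Lebesgue integral
  have hg1 : ∫⁻ y in ball c r, H (x - y) ∂gaussMeasure d
      = ∫⁻ y in ball c r, dens y * H (x - y) ∂volume := by
    rw [gaussMeasure, ← hdens,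
      setLIntegral_withDensity_eq_setLIntegral_mul _ hdm hHm2 measurableSet_ball]
    rfl
  -- key inequality
  have key : ∫⁻ y in ball c r, H (x - y) ∂gaussMeasure d ≤ D * N * gaussMeasure d (ball c r) := by
    have step2 : ∫⁻ y in ball c r, dens y * H (x - y) ∂volume
        ≤ K * dens c * ∫⁻ y in ball c r, H (x - y) ∂volume := by
      rw [← lintegral_const_mul _ hHm2]
      refine setLIntegral_mono (measurable_const.mul hHm2) fun y hy => ?_
      exact mul_le_mul_left (hdle y hy) _
    have hsub : ball c r ⊆ ball x (2 * r) := by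
      intro y hy
      rw [mem_ball] at hy hx ⊢
      calc dist y x ≤ dist y c + dist c x := dist_triangle y c x
        _ = dist y c + dist x c := by rw [dist_comm c x]
        _ < r + r := add_lt_add hy hx
        _ = 2 * r := by ring
    have step3 : ∫⁻ y in ball c r, H (x - y) ∂volume
        ≤ ∫⁻ y in ball x (2 * r), H (x - y) ∂volume := lintegral_mono_set hsub
    have hpre : (fun y : Euc d => x - y) ⁻¹' (ball (0 : Euc d) (2 * r)) = ball x (2 * r) := by
      ext y
      simp [mem_ball, dist_eq_norm, norm_sub_rev]
    have step4 : ∫⁻ y in ball x (2 * r), H (x - y) ∂volume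
        = ∫⁻ z in ball (0 : Euc d) (2 * r), H z ∂volume := by
      rw [← hpre]
      exact (Measure.measurePreserving_sub_left volume x).setLIntegral_comp_preimage
        measurableSet_ball hHm
    have step5 : ∫⁻ z in ball (0 : Euc d) (2 * r), H z ∂volume
        = N * ENNReal.ofReal ((2 * r) ^ d / d) := by
      rw [polar' hd H hHm hHh (by positivity : (0:ℝ) < 2 * r)]
    -- lower bound on the gaussian measure of the ball
    have hvolball : volume (ball c r) = ENNReal.ofReal (r ^ d) * V := by
      rw [hV, Measure.addHaar_ball volume c hrpos.le, hdim]
    have hγ : K⁻¹ * dens c * (ENNReal.ofReal (r ^ d) * V) ≤ gaussMeasure d (ball c r) := by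
      rw [gaussMeasure, ← hdens, withDensity_apply _ measurableSet_ball]
      calc K⁻¹ * dens c * (ENNReal.ofReal (r ^ d) * V)
          = K⁻¹ * dens c * volume (ball c r) := by rw [hvolball]
        _ = ∫⁻ _ in ball c r, K⁻¹ * dens c ∂volume := by rw [setLIntegral_const]
        _ ≤ ∫⁻ y in ball c r, dens y ∂volume :=
            setLIntegral_mono hdm fun y hy => hdge y hy
    -- combine
    have hsplit : ENNReal.ofReal ((2 * r) ^ d / d)
        = ENNReal.ofReal (2 ^ d / d) * ENNReal.ofReal (r ^ d) := by
      rw [← ENNReal.ofReal_mul (by positivity)]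
      congr 1
      rw [mul_pow]
      ring
    have e1 : K ^ 2 * K⁻¹ = K := by
      rw [sq, mul_assoc, ENNReal.mul_inv_cancel hK0 hKt, mul_one]
    have e2 : V⁻¹ * V = 1 := ENNReal.inv_mul_cancel hV0 hVt
    have algebra : K * dens c * (N * ENNReal.ofReal ((2 * r) ^ d / d))
        = D * N * (K⁻¹ * dens c * (ENNReal.ofReal (r ^ d) * V)) := by
      rw [hsplit, hD]
      calc K * dens c * (N * (ENNReal.ofReal (2 ^ d / d) * ENNReal.ofReal (r ^ d)))
          = (K ^ 2 * K⁻¹) * ((V⁻¹ * V) * (ENNReal.ofReal (2 ^ d / d) * N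
              * (dens c * ENNReal.ofReal (r ^ d)))) := by rw [e1, e2]; ring
        _ = K ^ 2 * ENNReal.ofReal (2 ^ d / d) * V⁻¹ * N
              * (K⁻¹ * dens c * (ENNReal.ofReal (r ^ d) * V)) := by ring
    calc ∫⁻ y in ball c r, H (x - y) ∂gaussMeasure d
        = ∫⁻ y in ball c r, dens y * H (x - y) ∂volume := hg1
      _ ≤ K * dens c * ∫⁻ y in ball c r, H (x - y) ∂volume := step2
      _ ≤ K * dens c * ∫⁻ y in ball x (2 * r), H (x - y) ∂volume :=
          mul_le_mul_right step3 _
      _ = K * dens c * (N * ENNReal.ofReal ((2 * r) ^ d / d)) := by rw [step4, step5]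
      _ = D * N * (K⁻¹ * dens c * (ENNReal.ofReal (r ^ d) * V)) := algebra
      _ ≤ D * N * gaussMeasure d (ball c r) := mul_le_mul_right hγ _
  have final := ENNReal.rpow_le_rpow key hs'
  rw [ENNReal.mul_rpow_of_nonneg _ _ hs', ENNReal.mul_rpow_of_nonneg _ _ hs'] at final
  exact final
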